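/- arXiv:1807.05625 — 3 statements merged into one kernel-verified Lean document; each statement's English description precedes it below -/
import Mathlib

section
/- For m, n ≥ 2, the ellipsoid E = {z ∈ ℝ^m ⊗ ℝ^n : |z₁₁|²/3 + |z_{mn}|²/2 + Σ_{(i,j)≠(1,1),(m,n)} |z_{ij}|² ≤ 1} is not a tensorial body: there exist no 0-symmetric convex bodies Q₁ ⊆ ℝ^m, Q₂ ⊆ ℝ^n with Q₁ ⊗_π Q₂ ⊆ E ⊆ Q₁ ⊗_ε Q₂. -/
open Set

/-- Outer product of two vectors, as an `m × n` matrix. -/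
def outer {m n : ℕ} (x : Fin m → ℝ) (y : Fin n → ℝ) : Matrix (Fin m) (Fin n) ℝ :=
  fun i j => x i * y j

/-- Hilbert–Schmidt (Frobenius) inner product on matrices. -/
def hsInner {m n : ℕ} (A B : Matrix (Fin m) (Fin n) ℝ) : ℝ := ∑ i, ∑ j, A i j * B i j

/-- Polar of a set of matrices w.r.t. the Hilbert–Schmidt inner product. -/
def polar {m n : ℕ} (C : Set (Matrix (Fin m) (Fin n) ℝ)) : Set (Matrix (Fin m) (Fin n) ℝ) :=
  {z | ∀ u ∈ C, |hsInner u z| ≤ 1}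

/-- Polar of a set of vectors w.r.t. the standard inner product. -/
def polarVec {d : ℕ} (C : Set (Fin d → ℝ)) : Set (Fin d → ℝ) :=
  {z | ∀ u ∈ C, |∑ i, u i * z i| ≤ 1}

/-- A 0-symmetric convex body: compact, convex, nonempty interior, symmetric. -/
def IsSymCB {E : Type*} [AddCommGroup E] [Module ℝ E] [TopologicalSpace E] (Q : Set E) : Prop :=
  IsCompact Q ∧ Convex ℝ Q ∧ (interior Q).Nonempty ∧ Q = -Q

/-- Projective tensor product of convex bodies. -/
def projTP {m n : ℕ} (Q₁ : Set (Fin m → ℝ)) (Q₂ : Set (Fin n → ℝ)) :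
    Set (Matrix (Fin m) (Fin n) ℝ) :=
  convexHull ℝ {M | ∃ x ∈ Q₁, ∃ y ∈ Q₂, M = outer x y}

/-- Injective tensor product of convex bodies. -/
def injTP {m n : ℕ} (Q₁ : Set (Fin m → ℝ)) (Q₂ : Set (Fin n → ℝ)) :
    Set (Matrix (Fin m) (Fin n) ℝ) :=
  polar (projTP (polarVec Q₁) (polarVec Q₂))

/-!
Write `α_i = max_{x ∈ Q₁} x_i` and `γ_j = max_{y ∈ Q₂} y_j`. Every `x ⊗ y` lies in `Q₁ ⊗_π Q₂ ⊆ E`,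
so each unweighted entry gives `α_i γ_j ≤ 1`; in particular `α_p₁ γ_q₂ ≤ 1` and `α_q₁ γ_p₂ ≤ 1`.
Testing `c e_i ⊗ e_j ∈ E ⊆ Q₁ ⊗_ε Q₂` against `(e_i / α_i) ⊗ (e_j / γ_j) ∈ Q₁° ⊗_π Q₂°` gives
`|c| ≤ α_i γ_j`, hence `a ≤ (α_p₁ γ_p₂)²` and `b ≤ (α_q₁ γ_q₂)²` for the weighted entries.
Multiplying, `a b ≤ (α_p₁ γ_q₂)² (α_q₁ γ_p₂)² ≤ 1`, which fails for `a b = 3 · 2`.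
-/

open Finset Topology

section SymmetricConvexBody

variable {E : Type*} [AddCommGroup E] [Module ℝ E] [TopologicalSpace E]

lemma IsSymCB.neg_mem {Q : Set E} (hQ : IsSymCB Q) {x : E} (hx : x ∈ Q) : -x ∈ Q := by
  rw [hQ.2.2.2]
  exact Set.neg_mem_neg.2 hx

variable [IsTopologicalAddGroup E] [ContinuousSMul ℝ E]

lemma IsSymCB.zero_mem_interior {Q : Set E} (hQ : IsSymCB Q) : (0 : E) ∈ interior Q := by
  obtain ⟨p, hp⟩ := hQ.2.2.1
  have hp' : -p ∈ interior Q :=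
    interior_maximal (fun y hy => by simpa using hQ.neg_mem (interior_subset hy)) isOpen_interior.neg
      (Set.neg_mem_neg.2 hp)
  have half : (0 : ℝ) ≤ 1 / 2 := by norm_num
  simpa using hQ.2.1.interior hp hp' half half (by norm_num)

theorem IsSymCB.exists_forall_abs_le {Q : Set E} (hQ : IsSymCB Q) {f : E →L[ℝ] ℝ} (hf : f ≠ 0) :
    ∃ x ∈ Q, 0 < f x ∧ ∀ y ∈ Q, |f y| ≤ f x := by
  have h0 := hQ.zero_mem_interior
  obtain ⟨x, hxQ, hmax⟩ :=
    hQ.1.exists_isMaxOn ⟨0, interior_subset h0⟩ f.continuous.continuousOn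
  have habs : ∀ y ∈ Q, |f y| ≤ f x := fun y hy =>
    abs_le.2 ⟨neg_le.1 ((map_neg f y).symm.trans_le (hmax (hQ.neg_mem hy))), hmax hy⟩
  obtain ⟨v, hv⟩ : ∃ v, f v ≠ 0 := by
    by_contra! h
    exact hf (ContinuousLinearMap.ext h)
  have hsmul : ∀ᶠ t in 𝓝[≠] (0 : ℝ), t • v ∈ Q :=
    (((continuous_id.smul continuous_const).tendsto' 0 0 (by simp)).eventually
      (mem_interior_iff_mem_nhds.1 h0)).filter_mono nhdsWithin_le_nhds
  obtain ⟨t, htQ, ht : t ≠ 0⟩ := (hsmul.and self_mem_nhdsWithin).exists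
  exact ⟨x, hxQ, (abs_pos.2 (by simp [ht, hv])).trans_le (habs _ htQ), habs⟩

end SymmetricConvexBody

lemma IsSymCB.exists_forall_abs_apply_le {d : ℕ} {Q : Set (Fin d → ℝ)} (hQ : IsSymCB Q)
    (i : Fin d) : ∃ x ∈ Q, 0 < x i ∧ ∀ y ∈ Q, |y i| ≤ x i :=
  hQ.exists_forall_abs_le (f := ContinuousLinearMap.proj i) fun h => by
    simpa using DFunLike.congr_fun h (Pi.single i 1)

lemma single_inv_mem_polarVec {d : ℕ} {Q : Set (Fin d → ℝ)} {i : Fin d} {α : ℝ} (hα : 0 < α)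
    (hQ : ∀ x ∈ Q, |x i| ≤ α) : Pi.single i α⁻¹ ∈ polarVec Q := by
  intro x hx
  simp only [Pi.single_apply, mul_ite, mul_zero, sum_ite_eq']
  rw [if_pos (Finset.mem_univ i), abs_mul, abs_inv, abs_of_pos hα, ← div_eq_mul_inv]
  exact (div_le_one hα).2 (hQ x hx)

lemma outer_mem_projTP {m n : ℕ} {Q₁ : Set (Fin m → ℝ)} {Q₂ : Set (Fin n → ℝ)} {x : Fin m → ℝ}
    {y : Fin n → ℝ} (hx : x ∈ Q₁) (hy : y ∈ Q₂) : outer x y ∈ projTP Q₁ Q₂ :=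
  subset_convexHull ℝ _ ⟨x, hx, y, hy, rfl⟩

lemma hsInner_outer_single {m n : ℕ} (i : Fin m) (j : Fin n) (a b : ℝ)
    (z : Matrix (Fin m) (Fin n) ℝ) :
    hsInner (outer (Pi.single i a) (Pi.single j b)) z = a * b * z i j := by
  simp [hsInner, outer, Pi.single_apply, ite_mul, mul_assoc]

lemma abs_le_of_single_mem_injTP {m n : ℕ} {Q₁ : Set (Fin m → ℝ)} {Q₂ : Set (Fin n → ℝ)}
    {i : Fin m} {j : Fin n} {c α γ : ℝ} (hα : 0 < α) (hγ : 0 < γ) (h₁ : ∀ x ∈ Q₁, |x i| ≤ α)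
    (h₂ : ∀ y ∈ Q₂, |y j| ≤ γ) (hc : Matrix.single i j c ∈ injTP Q₁ Q₂) : |c| ≤ α * γ := by
  have h := hc _ (outer_mem_projTP (single_inv_mem_polarVec hα h₁) (single_inv_mem_polarVec hγ h₂))
  rw [hsInner_outer_single, Matrix.single_apply_same, ← mul_inv, abs_mul, abs_inv,
    abs_of_pos (mul_pos hα hγ), inv_mul_le_iff₀ (mul_pos hα hγ), mul_one] at h
  exact h

def ellipsoid {m n : ℕ} (a b : ℝ) (p q : Fin m × Fin n) : Set (Matrix (Fin m) (Fin n) ℝ) :=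
  {z | z p.1 p.2 ^ 2 / a + z q.1 q.2 ^ 2 / b + ∑ r ∈ univ \ {p, q}, z r.1 r.2 ^ 2 ≤ 1}

section Ellipsoid

variable {m n : ℕ} {a b : ℝ} {p q : Fin m × Fin n}

lemma sq_le_one_of_mem_ellipsoid (ha : 0 ≤ a) (hb : 0 ≤ b) {z : Matrix (Fin m) (Fin n) ℝ}
    (hz : z ∈ ellipsoid a b p q) {r : Fin m × Fin n} (hr : r ∉ ({p, q} : Finset _)) :
    z r.1 r.2 ^ 2 ≤ 1 := by
  have hle : z r.1 r.2 ^ 2 ≤ ∑ s ∈ univ \ {p, q}, z s.1 s.2 ^ 2 :=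
    single_le_sum (f := fun s : Fin m × Fin n => z s.1 s.2 ^ 2) (fun _ _ => sq_nonneg _)
      (mem_sdiff.2 ⟨Finset.mem_univ r, hr⟩)
  have : 0 ≤ z p.1 p.2 ^ 2 / a := by positivity
  have : 0 ≤ z q.1 q.2 ^ 2 / b := by positivity
  exact hle.trans (by linarith [hz.out])

lemma sum_sdiff_single_sq_eq_zero {r : Fin m × Fin n} (hr : r ∈ ({p, q} : Finset _)) (c : ℝ) :
    ∑ s ∈ univ \ {p, q}, Matrix.single r.1 r.2 c s.1 s.2 ^ 2 = 0 :=
  sum_eq_zero fun s hs => by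
    have hsr : ¬(r.1 = s.1 ∧ r.2 = s.2) := fun h => (mem_sdiff.1 hs).2 (Prod.ext h.1 h.2 ▸ hr)
    simp [hsr]

lemma single_sqrt_mem_ellipsoid_left (ha : 0 ≤ a) (hpq : p ≠ q) :
    Matrix.single p.1 p.2 √a ∈ ellipsoid a b p q := by
  have hq : ¬(p.1 = q.1 ∧ p.2 = q.2) := fun h => hpq (Prod.ext h.1 h.2)
  simp only [ellipsoid, Set.mem_ofPred_eq, Matrix.single_apply_same,
    sum_sdiff_single_sq_eq_zero (mem_insert_self p _), Real.sq_sqrt ha]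
  simp [hq, div_self_le_one]

lemma single_sqrt_mem_ellipsoid_right (hb : 0 ≤ b) (hpq : p ≠ q) :
    Matrix.single q.1 q.2 √b ∈ ellipsoid a b p q := by
  have hp : ¬(q.1 = p.1 ∧ q.2 = p.2) := fun h => hpq (Prod.ext h.1 h.2).symm
  simp only [ellipsoid, Set.mem_ofPred_eq, Matrix.single_apply_same,
    sum_sdiff_single_sq_eq_zero (mem_insert_of_mem (mem_singleton_self q)), Real.sq_sqrt hb]
  simp [hp, div_self_le_one]

theorem not_tensorial_ellipsoid_of_ne (ha : 0 ≤ a) (hb : 0 ≤ b) (hab : 1 < a * b)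
    (h₁ : p.1 ≠ q.1) (h₂ : p.2 ≠ q.2) :
    ¬ ∃ (Q₁ : Set (Fin m → ℝ)) (Q₂ : Set (Fin n → ℝ)), IsSymCB Q₁ ∧ IsSymCB Q₂ ∧
      projTP Q₁ Q₂ ⊆ ellipsoid a b p q ∧ ellipsoid a b p q ⊆ injTP Q₁ Q₂ := by
  rintro ⟨Q₁, Q₂, hQ₁, hQ₂, hproj, hinj⟩
  have hpq : p ≠ q := fun h => h₁ (congrArg Prod.fst h)
  obtain ⟨x, hxQ, hx, hxmax⟩ := hQ₁.exists_forall_abs_apply_le p.1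
  obtain ⟨x', hx'Q, hx', hx'max⟩ := hQ₁.exists_forall_abs_apply_le q.1
  obtain ⟨y, hyQ, hy, hymax⟩ := hQ₂.exists_forall_abs_apply_le p.2
  obtain ⟨y', hy'Q, hy', hy'max⟩ := hQ₂.exists_forall_abs_apply_le q.2
  have hxy' : (x p.1 * y' q.2) ^ 2 ≤ 1 :=
    sq_le_one_of_mem_ellipsoid (r := (p.1, q.2)) ha hb (hproj (outer_mem_projTP hxQ hy'Q))
      (by simp [Prod.ext_iff, h₁, h₂.symm])
  have hx'y : (x' q.1 * y p.2) ^ 2 ≤ 1 :=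
    sq_le_one_of_mem_ellipsoid (r := (q.1, p.2)) ha hb (hproj (outer_mem_projTP hx'Q hyQ))
      (by simp [Prod.ext_iff, h₁.symm, h₂])
  have hp : a ≤ (x p.1 * y p.2) ^ 2 := by
    have h := abs_le_of_single_mem_injTP hx hy hxmax hymax
      (hinj (single_sqrt_mem_ellipsoid_left ha hpq))
    simpa [Real.sq_sqrt ha] using pow_le_pow_left₀ (abs_nonneg _) h 2
  have hq : b ≤ (x' q.1 * y' q.2) ^ 2 := by
    have h := abs_le_of_single_mem_injTP hx' hy' hx'max hy'max
      (hinj (single_sqrt_mem_ellipsoid_right hb hpq))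
    simpa [Real.sq_sqrt hb] using pow_le_pow_left₀ (abs_nonneg _) h 2
  have : a * b ≤ 1 :=
    calc a * b ≤ (x p.1 * y p.2) ^ 2 * (x' q.1 * y' q.2) ^ 2 := mul_le_mul hp hq hb (sq_nonneg _)
      _ = (x p.1 * y' q.2) ^ 2 * (x' q.1 * y p.2) ^ 2 := by ring
      _ ≤ 1 := mul_le_one₀ hxy' (sq_nonneg _) hx'y
  linarith

end Ellipsoid

theorem not_tensorial_ellipsoid (m n : ℕ) (hm : 2 ≤ m) (hn : 2 ≤ n) :
    ¬ ∃ (Q₁ : Set (Fin m → ℝ)) (Q₂ : Set (Fin n → ℝ)), IsSymCB Q₁ ∧ IsSymCB Q₂ ∧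
      projTP Q₁ Q₂ ⊆
        {z : Matrix (Fin m) (Fin n) ℝ |
          (z ⟨0, by omega⟩ ⟨0, by omega⟩) ^ 2 / 3 +
          (z ⟨m - 1, by omega⟩ ⟨n - 1, by omega⟩) ^ 2 / 2 +
          ∑ q ∈ (Finset.univ \ {((⟨0, by omega⟩ : Fin m), (⟨0, by omega⟩ : Fin n)),
              ((⟨m - 1, by omega⟩ : Fin m), (⟨n - 1, by omega⟩ : Fin n))} :
              Finset (Fin m × Fin n)), (z q.1 q.2) ^ 2 ≤ 1} ∧
      {z : Matrix (Fin m) (Fin n) ℝ |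
          (z ⟨0, by omega⟩ ⟨0, by omega⟩) ^ 2 / 3 +
          (z ⟨m - 1, by omega⟩ ⟨n - 1, by omega⟩) ^ 2 / 2 +
          ∑ q ∈ (Finset.univ \ {((⟨0, by omega⟩ : Fin m), (⟨0, by omega⟩ : Fin n)),
              ((⟨m - 1, by omega⟩ : Fin m), (⟨n - 1, by omega⟩ : Fin n))} :
              Finset (Fin m × Fin n)), (z q.1 q.2) ^ 2 ≤ 1} ⊆ injTP Q₁ Q₂ :=
  not_tensorial_ellipsoid_of_ne (p := (⟨0, by omega⟩, ⟨0, by omega⟩))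
    (q := (⟨m - 1, by omega⟩, ⟨n - 1, by omega⟩)) (by norm_num) (by norm_num) (by norm_num)
    (Fin.ne_of_val_ne (by simp; omega)) (Fin.ne_of_val_ne (by simp; omega))
end

section
/- Let E = T(B₂^{m,n}) ⊆ ℝ^m ⊗ ℝ^n be an ellipsoid with B₂^m ⊗_π B₂^n ⊆ E ⊆ B₂^m ⊗_ε B₂^n. Then for L = T⁻¹ and L = Tᵗ, the identity ⟨x,z⟩⟨y,w⟩ = (⟨L(x⊗y), L(z⊗w)⟩_H + ⟨L(x⊗w), L(z⊗y)⟩_H)/2 holds for all x,z ∈ ℝ^m, y,w ∈ ℝ^n; and conversely, these identities imply the inclusions. -/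
open Set

/-- A linear map on the matrix space, given by a big matrix indexed by pairs. -/
def act {m n : ℕ} (T : Matrix (Fin m × Fin n) (Fin m × Fin n) ℝ)
    (A : Matrix (Fin m) (Fin n) ℝ) : Matrix (Fin m) (Fin n) ℝ :=
  fun i j => ∑ q, T (i, j) q * A q.1 q.2

/-- The Hilbert–Schmidt unit ball of matrices. -/
def hsBall (m n : ℕ) : Set (Matrix (Fin m) (Fin n) ℝ) := {A | hsInner A A ≤ 1}

/-- The Euclidean unit ball in ℝ^d. -/
def euclBall (d : ℕ) : Set (Fin d → ℝ) := {x | ∑ i, x i ^ 2 ≤ 1}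

/-!
Identify `m × n` matrices with `EuclideanSpace ℝ (Fin m × Fin n)`, so that `hsInner` becomes the
Euclidean inner product. Then `E = T(B₂^{m,n})` is `{A | ‖T⁻¹ A‖ ≤ 1}`, and since `Tᵀ` is the
adjoint of `T`, `E ⊆ C°` means `‖Tᵀ u‖ ≤ 1` on `C`. Both conditions are convex, so for
`C = B₂^m ⊗_π B₂^n` they need only be checked on `x ⊗ y` with `‖x‖, ‖y‖ ≤ 1`; by homogeneity they
say `‖T⁻¹ (x ⊗ y)‖ ≤ ‖x‖ ‖y‖` and `‖Tᵀ (x ⊗ y)‖ ≤ ‖x‖ ‖y‖`. As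
`⟪T⁻¹ u, Tᵀ u⟫ = ‖u‖² = ‖x‖² ‖y‖²` for `u = x ⊗ y`, Cauchy–Schwarz forces equality in both, and
polarizing `‖L (x ⊗ y)‖² = ‖x‖² ‖y‖²` in each variable gives the identity; conversely the identity
at `z = x`, `w = y` is that equality.
-/

open scoped InnerProductSpace
open WithLp (toLp)
open Matrix

section Bilinear

variable {V W U : Type*} [NormedAddCommGroup V] [NormedSpace ℝ V]
  [NormedAddCommGroup W] [NormedSpace ℝ W]

theorem LinearMap.norm_apply₂_le_mul_of_unitBall [NormedAddCommGroup U] [NormedSpace ℝ U]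
    (β : V →ₗ[ℝ] W →ₗ[ℝ] U) (h : ∀ x y, ‖x‖ ≤ 1 → ‖y‖ ≤ 1 → ‖β x y‖ ≤ 1) (x : V) (y : W) :
    ‖β x y‖ ≤ ‖x‖ * ‖y‖ := by
  rcases eq_or_ne x 0 with rfl | hx
  · simp
  rcases eq_or_ne y 0 with rfl | hy
  · simp
  have hxy := h (‖x‖⁻¹ • x) (‖y‖⁻¹ • y) (norm_smul_inv_norm hx).le (norm_smul_inv_norm hy).le
  rw [map_smul, LinearMap.map_smul₂, norm_smul, norm_smul, norm_inv, norm_inv,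
    norm_norm, norm_norm, ← mul_assoc, ← mul_inv, inv_mul_le_iff₀ (by positivity), mul_one] at hxy
  exact hxy.trans_eq (mul_comm _ _)

variable [NormedAddCommGroup U] [InnerProductSpace ℝ U]

theorem forall_abs_inner_le_one_iff_norm_le_one (v : U) :
    (∀ b : U, ‖b‖ ≤ 1 → |⟪v, b⟫_ℝ| ≤ 1) ↔ ‖v‖ ≤ 1 := by
  refine ⟨fun h => ?_, fun hv b hb => ?_⟩
  · rcases eq_or_ne v 0 with rfl | hv
    · simp
    have := h (‖v‖⁻¹ • v) (norm_smul_inv_norm hv).le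
    rwa [real_inner_smul_right, real_inner_self_eq_norm_sq, sq, inv_mul_cancel_left₀
      (norm_ne_zero_iff.mpr hv), abs_norm] at this
  · exact (abs_real_inner_le_norm v b).trans (mul_le_one₀ hv (norm_nonneg b) hb)

theorem LinearMap.unitBall_bounds_iff_norm_apply₂_eq_mul (β₁ β₂ : V →ₗ[ℝ] W →ₗ[ℝ] U)
    (hpair : ∀ x y, ⟪β₁ x y, β₂ x y⟫_ℝ = (‖x‖ * ‖y‖) ^ 2) :
    ((∀ x y, ‖x‖ ≤ 1 → ‖y‖ ≤ 1 → ‖β₁ x y‖ ≤ 1) ∧ (∀ x y, ‖x‖ ≤ 1 → ‖y‖ ≤ 1 → ‖β₂ x y‖ ≤ 1)) ↔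
      (∀ x y, ‖β₁ x y‖ = ‖x‖ * ‖y‖) ∧ (∀ x y, ‖β₂ x y‖ = ‖x‖ * ‖y‖) := by
  constructor
  · rintro ⟨h₁, h₂⟩
    have h (x y) : ‖β₁ x y‖ = ‖x‖ * ‖y‖ ∧ ‖β₂ x y‖ = ‖x‖ * ‖y‖ := by
      have hle₁ := β₁.norm_apply₂_le_mul_of_unitBall h₁ x y
      have hle₂ := β₂.norm_apply₂_le_mul_of_unitBall h₂ x y
      have hcs : (‖x‖ * ‖y‖) ^ 2 ≤ ‖β₁ x y‖ * ‖β₂ x y‖ := hpair x y ▸ real_inner_le_norm _ _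
      constructor <;> nlinarith [norm_nonneg (β₁ x y), norm_nonneg (β₂ x y)]
    exact ⟨fun x y => (h x y).1, fun x y => (h x y).2⟩
  · rintro ⟨h₁, h₂⟩
    exact ⟨fun x y hx hy => h₁ x y ▸ mul_le_one₀ hx (norm_nonneg y) hy,
      fun x y hx hy => h₂ x y ▸ mul_le_one₀ hx (norm_nonneg y) hy⟩

end Bilinear

section Polarization

variable {V W U : Type*} [NormedAddCommGroup V] [InnerProductSpace ℝ V]
  [NormedAddCommGroup W] [InnerProductSpace ℝ W] [NormedAddCommGroup U] [InnerProductSpace ℝ U]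

theorem LinearMap.norm_apply₂_eq_mul_iff (β : V →ₗ[ℝ] W →ₗ[ℝ] U) :
    (∀ x y, ‖β x y‖ = ‖x‖ * ‖y‖) ↔
      ∀ x z y w, ⟪β x y, β z w⟫_ℝ + ⟪β x w, β z y⟫_ℝ = 2 * (⟪x, z⟫_ℝ * ⟪y, w⟫_ℝ) := by
  constructor
  · intro h
    have hsq : ∀ x y, ⟪β x y, β x y⟫_ℝ = ⟪x, x⟫_ℝ * ⟪y, y⟫_ℝ := fun x y => by
      simp only [real_inner_self_eq_norm_sq, h, mul_pow]
    have hleft : ∀ x z y, ⟪β x y, β z y⟫_ℝ = ⟪x, z⟫_ℝ * ⟪y, y⟫_ℝ := fun x z y => by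
      have := hsq (x + z) y
      simp only [map_add, LinearMap.add_apply, inner_add_left, inner_add_right, hsq] at this
      rw [real_inner_comm x z, real_inner_comm (β x y)] at this
      linarith
    intro x z y w
    have := hleft x z (y + w)
    simp only [map_add, inner_add_left, inner_add_right, hleft] at this
    rw [real_inner_comm y w] at this
    linarith
  · intro h x y
    have hsq := h x x y y
    rw [real_inner_self_eq_norm_sq, real_inner_self_eq_norm_sq, real_inner_self_eq_norm_sq,
      ← mul_pow] at hsq
    exact (pow_left_inj₀ (norm_nonneg _) (by positivity) two_ne_zero).mp (by linarith)

end Polarization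

section Euclidean

variable {ι κ : Type*} [Fintype ι] [Fintype κ]

def EuclideanSpace.tensorBilin :
    EuclideanSpace ℝ ι →ₗ[ℝ] EuclideanSpace ℝ κ →ₗ[ℝ] EuclideanSpace ℝ (ι × κ) :=
  LinearMap.mk₂ ℝ (fun x y => toLp 2 fun q => x q.1 * y q.2)
    (fun _ _ _ => by ext; simp [add_mul]) (fun _ _ _ => by ext; simp [mul_assoc])
    (fun _ _ _ => by ext; simp [mul_add]) (fun _ _ _ => by ext; simp [mul_left_comm])

theorem EuclideanSpace.inner_tensorBilin (x z : EuclideanSpace ℝ ι) (y w : EuclideanSpace ℝ κ) :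
    ⟪tensorBilin x y, tensorBilin z w⟫_ℝ = ⟪x, z⟫_ℝ * ⟪y, w⟫_ℝ := by
  simp only [tensorBilin, LinearMap.mk₂_apply, PiLp.inner_apply, Fintype.sum_prod_type,
    Finset.sum_mul_sum, RCLike.inner_apply, conj_trivial]
  exact Finset.sum_congr rfl fun i _ => Finset.sum_congr rfl fun j _ => by ring

theorem EuclideanSpace.norm_tensorBilin (x : EuclideanSpace ℝ ι) (y : EuclideanSpace ℝ κ) :
    ‖tensorBilin x y‖ = ‖x‖ * ‖y‖ := by
  rw [← sq_eq_sq₀ (norm_nonneg _) (by positivity), mul_pow, ← real_inner_self_eq_norm_sq,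
    inner_tensorBilin, real_inner_self_eq_norm_sq, real_inner_self_eq_norm_sq]

variable [DecidableEq ι]

theorem Matrix.inner_toLpLin_transpose (A : Matrix ι ι ℝ) (v w : EuclideanSpace ℝ ι) :
    ⟪toLpLin 2 2 Aᵀ v, w⟫_ℝ = ⟪v, toLpLin 2 2 A w⟫_ℝ := by
  simp only [EuclideanSpace.inner_eq_star_dotProduct, star_trivial, ofLp_toLpLin, toLin'_apply,
    mulVec_transpose]
  rw [dotProduct_comm, ← dotProduct_mulVec]
  exact dotProduct_comm _ _

theorem Matrix.inner_toLpLin_inv_toLpLin_transpose {A : Matrix ι ι ℝ} (hA : IsUnit A)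
    (v : EuclideanSpace ℝ ι) : ⟪toLpLin 2 2 A⁻¹ v, toLpLin 2 2 Aᵀ v⟫_ℝ = ‖v‖ ^ 2 := by
  rw [real_inner_comm, inner_toLpLin_transpose, ← LinearMap.comp_apply, ← toLpLin_mul_same,
    mul_nonsing_inv _ ((isUnit_iff_isUnit_det A).mp hA), toLpLin_one, LinearMap.id_apply,
    real_inner_self_eq_norm_sq]

end Euclidean

section Matrix

variable {m n : ℕ}

def hsFlatten : Matrix (Fin m) (Fin n) ℝ ≃ₗ[ℝ] EuclideanSpace ℝ (Fin m × Fin n) :=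
  (LinearEquiv.curry ℝ ℝ (Fin m) (Fin n)).symm ≪≫ₗ (WithLp.linearEquiv 2 ℝ _).symm

def actOuter (L : Matrix (Fin m × Fin n) (Fin m × Fin n) ℝ) :
    EuclideanSpace ℝ (Fin m) →ₗ[ℝ] EuclideanSpace ℝ (Fin n) →ₗ[ℝ]
      EuclideanSpace ℝ (Fin m × Fin n) :=
  EuclideanSpace.tensorBilin.compr₂ (toLpLin 2 2 L)

theorem hsInner_eq_inner (A B : Matrix (Fin m) (Fin n) ℝ) :
    hsInner A B = ⟪hsFlatten A, hsFlatten B⟫_ℝ := by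
  simp only [hsInner, hsFlatten, PiLp.inner_apply, Fintype.sum_prod_type, RCLike.inner_apply,
    conj_trivial]
  exact Finset.sum_congr rfl fun i _ => Finset.sum_congr rfl fun j _ => mul_comm _ _

theorem hsFlatten_act (L : Matrix (Fin m × Fin n) (Fin m × Fin n) ℝ)
    (A : Matrix (Fin m) (Fin n) ℝ) : hsFlatten (act L A) = toLpLin 2 2 L (hsFlatten A) :=
  rfl

theorem hsFlatten_act_outer (L : Matrix (Fin m × Fin n) (Fin m × Fin n) ℝ) (x : Fin m → ℝ)
    (y : Fin n → ℝ) : hsFlatten (act L (outer x y)) = actOuter L (toLp 2 x) (toLp 2 y) :=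
  rfl

theorem mem_hsBall_iff (A : Matrix (Fin m) (Fin n) ℝ) : A ∈ hsBall m n ↔ ‖hsFlatten A‖ ≤ 1 := by
  rw [hsBall, mem_ofPred_eq, hsInner_eq_inner, real_inner_self_eq_norm_sq,
    sq_le_one_iff₀ (norm_nonneg _)]

theorem mem_euclBall_iff {d : ℕ} (x : Fin d → ℝ) : x ∈ euclBall d ↔ ‖toLp 2 x‖ ≤ 1 := by
  rw [euclBall, mem_ofPred_eq, ← sq_le_one_iff₀ (norm_nonneg _), EuclideanSpace.real_norm_sq_eq]

theorem projTP_subset_iff (Q₁ : Set (Fin m → ℝ)) (Q₂ : Set (Fin n → ℝ))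
    {S : Set (Matrix (Fin m) (Fin n) ℝ)} (hS : Convex ℝ S) :
    projTP Q₁ Q₂ ⊆ S ↔ ∀ x ∈ Q₁, ∀ y ∈ Q₂, outer x y ∈ S := by
  rw [projTP, hS.convexHull_subset_iff]
  constructor
  · exact fun h x hx y hy => h ⟨x, hx, y, hy, rfl⟩
  · rintro h _ ⟨x, hx, y, hy, rfl⟩
    exact h x hx y hy

theorem convex_setOf_norm_act_le_one (L : Matrix (Fin m × Fin n) (Fin m × Fin n) ℝ) :
    Convex ℝ {A : Matrix (Fin m) (Fin n) ℝ | ‖hsFlatten (act L A)‖ ≤ 1} := by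
  simpa only [preimage, mem_closedBall_zero_iff, LinearMap.comp_apply, LinearEquiv.coe_coe,
    ← hsFlatten_act] using
    (convex_closedBall (0 : EuclideanSpace ℝ (Fin m × Fin n)) 1).linear_preimage
      ((toLpLin 2 2 L).comp hsFlatten.toLinearMap)

theorem act_image_hsBall {T : Matrix (Fin m × Fin n) (Fin m × Fin n) ℝ} (hT : IsUnit T) :
    act T '' hsBall m n = {A | ‖hsFlatten (act T⁻¹ A)‖ ≤ 1} := by
  have hdet := (isUnit_iff_isUnit_det T).mp hT
  ext A
  constructor
  · rintro ⟨B, hB, rfl⟩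
    rwa [mem_ofPred_eq, hsFlatten_act, hsFlatten_act, ← LinearMap.comp_apply,
      ← toLpLin_mul_same, nonsing_inv_mul T hdet, toLpLin_one, LinearMap.id_apply,
      ← mem_hsBall_iff]
  · intro hA
    refine ⟨act T⁻¹ A, (mem_hsBall_iff _).mpr hA, hsFlatten.injective ?_⟩
    rw [hsFlatten_act, hsFlatten_act, ← LinearMap.comp_apply, ← toLpLin_mul_same,
      mul_nonsing_inv T hdet, toLpLin_one, LinearMap.id_apply]

theorem act_image_hsBall_subset_polar_iff (T : Matrix (Fin m × Fin n) (Fin m × Fin n) ℝ)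
    (C : Set (Matrix (Fin m) (Fin n) ℝ)) :
    act T '' hsBall m n ⊆ polar C ↔ C ⊆ {u | ‖hsFlatten (act Tᵀ u)‖ ≤ 1} := by
  have hpair (u B : Matrix (Fin m) (Fin n) ℝ) :
      hsInner u (act T B) = ⟪hsFlatten (act Tᵀ u), hsFlatten B⟫_ℝ := by
    rw [hsInner_eq_inner, hsFlatten_act, hsFlatten_act, inner_toLpLin_transpose]
  rw [image_subset_iff]
  refine ⟨fun h u hu => (forall_abs_inner_le_one_iff_norm_le_one _).mp fun b hb => ?_,
    fun h B hB u hu => ?_⟩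
  · obtain ⟨B, rfl⟩ := hsFlatten.surjective b
    rw [← hpair]
    exact h ((mem_hsBall_iff B).mpr hb) u hu
  · show |hsInner u (act T B)| ≤ 1
    rw [hpair]
    exact (forall_abs_inner_le_one_iff_norm_le_one _).mpr (h hu) _ ((mem_hsBall_iff B).mp hB)

theorem outer_identity_iff_norm_actOuter_eq (L : Matrix (Fin m × Fin n) (Fin m × Fin n) ℝ) :
    (∀ (x z : Fin m → ℝ) (y w : Fin n → ℝ),
        (∑ i, x i * z i) * (∑ j, y j * w j) =
          (hsInner (act L (outer x y)) (act L (outer z w)) +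
            hsInner (act L (outer x w)) (act L (outer z y))) / 2) ↔
      ∀ x y, ‖actOuter L x y‖ = ‖x‖ * ‖y‖ := by
  have hdot {d : ℕ} (x z : Fin d → ℝ) : ∑ i, x i * z i = ⟪toLp 2 x, toLp 2 z⟫_ℝ := by
    simp [PiLp.inner_apply, mul_comm]
  rw [(actOuter L).norm_apply₂_eq_mul_iff]
  simp only [hdot, hsInner_eq_inner, hsFlatten_act_outer,
    (WithLp.toLp_surjective (p := 2)).forall]
  refine forall₄_congr fun x z y w => ?_
  constructor <;> intro h <;> linarith

theorem projTP_euclBall_subset_iff (L : Matrix (Fin m × Fin n) (Fin m × Fin n) ℝ) :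
    projTP (euclBall m) (euclBall n) ⊆ {A | ‖hsFlatten (act L A)‖ ≤ 1} ↔
      ∀ x y, ‖x‖ ≤ 1 → ‖y‖ ≤ 1 → ‖actOuter L x y‖ ≤ 1 := by
  simp only [projTP_subset_iff _ _ (convex_setOf_norm_act_le_one L), mem_euclBall_iff,
    mem_ofPred_eq, hsFlatten_act_outer, (WithLp.toLp_surjective (p := 2)).forall,
    imp_forall_iff]

theorem inner_actOuter_inv_actOuter_transpose {T : Matrix (Fin m × Fin n) (Fin m × Fin n) ℝ}
    (hT : IsUnit T) (x : EuclideanSpace ℝ (Fin m)) (y : EuclideanSpace ℝ (Fin n)) :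
    ⟪actOuter T⁻¹ x y, actOuter Tᵀ x y⟫_ℝ = (‖x‖ * ‖y‖) ^ 2 := by
  rw [actOuter, actOuter, LinearMap.compr₂_apply, LinearMap.compr₂_apply,
    inner_toLpLin_inv_toLpLin_transpose hT, EuclideanSpace.norm_tensorBilin]

end Matrix

theorem ellipsoid_inner_product_characterization (m n : ℕ)
    (T : Matrix (Fin m × Fin n) (Fin m × Fin n) ℝ) (hT : IsUnit T)
    (E : Set (Matrix (Fin m) (Fin n) ℝ)) (hE : E = act T '' hsBall m n) :
    (projTP (euclBall m) (euclBall n) ⊆ E ∧ E ⊆ polar (projTP (euclBall m) (euclBall n))) ↔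
    (∀ L ∈ ({T⁻¹, T.transpose} : Set (Matrix (Fin m × Fin n) (Fin m × Fin n) ℝ)),
      ∀ (x z : Fin m → ℝ) (y w : Fin n → ℝ),
        (∑ i, x i * z i) * (∑ j, y j * w j) =
          (hsInner (act L (outer x y)) (act L (outer z w)) +
            hsInner (act L (outer x w)) (act L (outer z y))) / 2) := by
  subst hE
  rw [act_image_hsBall_subset_polar_iff, act_image_hsBall hT, projTP_euclBall_subset_iff,
    projTP_euclBall_subset_iff, LinearMap.unitBall_bounds_iff_norm_apply₂_eq_mul _ _
      (inner_actOuter_inv_actOuter_transpose hT), ← outer_identity_iff_norm_actOuter_eq,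
    ← outer_identity_iff_norm_actOuter_eq]
  simp only [Set.forall_mem_insert, Set.mem_singleton_iff, forall_eq]
end

section
/- Matrix rigidity lemma: let d = mn and let S be a positive definite d×d real matrix written in m×m block form with n×n blocks, such that all diagonal blocks of S and of S⁻¹ equal Iₙ, and all off-diagonal blocks of S and of S⁻¹ are antisymmetric (with S itself symmetric, so the (i,k) block is minus the transpose of the (k,i) block). Then S = I_d. -/
open Set

/-- The (k,i) block of an (m*n)×(m*n)-matrix indexed by pairs. -/
def blk {m n : ℕ} (S : Matrix (Fin m × Fin n) (Fin m × Fin n) ℝ) (k i : Fin m) :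
    Matrix (Fin n) (Fin n) ℝ :=
  fun a b => S (k, a) (i, b)

/-!
`S + S⁻¹ - 2 = (S - 1)ᴴ S⁻¹ (S - 1)` is positive semidefinite, and the unit diagonal blocks give
`tr S = tr S⁻¹ = mn`, so its trace vanishes and hence so does the matrix. Then `(S - 1)² = 0`, and a
Hermitian matrix with zero square is zero.
-/

namespace Matrix

open scoped ComplexOrder

variable {n : Type*} [Fintype n] [DecidableEq n]

theorem sub_one_mul_inv_mul_sub_one {R : Type*} [CommRing R] {S : Matrix n n R}
    (hS : IsUnit S.det) : (S - 1) * S⁻¹ * (S - 1) = S + S⁻¹ - 2 := by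
  rw [sub_mul, mul_nonsing_inv S hS, one_mul, sub_mul, one_mul, mul_sub, nonsing_inv_mul S hS,
    mul_one, ← one_add_one_eq_two]
  abel

omit [DecidableEq n] in
theorem IsHermitian.eq_zero_of_mul_self_eq_zero {𝕜 : Type*} [RCLike 𝕜] {A : Matrix n n 𝕜}
    (hA : A.IsHermitian) (h : A * A = 0) : A = 0 :=
  conjTranspose_mul_self_eq_zero.mp (by rwa [hA.eq])

theorem PosDef.eq_one_of_trace_add_trace_inv {𝕜 : Type*} [RCLike 𝕜] {S : Matrix n n 𝕜}
    (hS : S.PosDef) (htr : S.trace + S⁻¹.trace = 2 * Fintype.card n) : S = 1 := by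
  have hdet : IsUnit S.det := (isUnit_iff_isUnit_det S).mp hS.isUnit
  have hpsd : (S + S⁻¹ - 2).PosSemidef := by
    rw [← sub_one_mul_inv_mul_sub_one hdet]
    have := hS.inv.posSemidef.conjTranspose_mul_mul_same (S - 1)
    rwa [conjTranspose_sub, hS.isHermitian.eq, conjTranspose_one] at this
  have hsum : S + S⁻¹ = 2 := by
    rw [← sub_eq_zero, ← hpsd.trace_eq_zero_iff, trace_sub, trace_add, htr,
      ← one_add_one_eq_two (R := Matrix n n 𝕜), trace_add, trace_one, two_mul, sub_self]
  have hsq : (S - 1) * (S - 1) = 0 := by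
    have hS2 : S * S + 1 = 2 * S := by
      rw [← mul_nonsing_inv S hdet, ← mul_add, hsum, (Commute.ofNat_right S 2).eq]
    calc (S - 1) * (S - 1) = S * S + 1 - 2 * S := by noncomm_ring
      _ = 0 := by rw [hS2, sub_self]
  exact sub_eq_zero.mp ((hS.isHermitian.sub isHermitian_one).eq_zero_of_mul_self_eq_zero hsq)

end Matrix

theorem trace_eq_card_of_blk_self_eq_one {m n : ℕ}
    {S : Matrix (Fin m × Fin n) (Fin m × Fin n) ℝ} (hdiag : ∀ k, blk S k k = 1) :
    S.trace = Fintype.card (Fin m × Fin n) := by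
  rw [← Matrix.trace_one]
  exact Finset.sum_congr rfl fun p _ => by
    simpa [blk] using congrFun (congrFun (hdiag p.1) p.2) p.2

theorem block_rigidity_general (m n : ℕ) (S : Matrix (Fin m × Fin n) (Fin m × Fin n) ℝ)
    (hpd : S.PosDef)
    (hdiag : ∀ k, blk S k k = 1)
    (hdiag' : ∀ k, blk S⁻¹ k k = 1) :
    S = 1 :=
  hpd.eq_one_of_trace_add_trace_inv <| by
    rw [trace_eq_card_of_blk_self_eq_one hdiag, trace_eq_card_of_blk_self_eq_one hdiag', two_mul]

theorem block_rigidity (m n : ℕ) (S : Matrix (Fin m × Fin n) (Fin m × Fin n) ℝ)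
    (hpd : S.PosDef)
    (hdiag : ∀ k, blk S k k = 1)
    (hanti : ∀ k i, k ≠ i → (blk S k i).transpose = -(blk S k i))
    (hdiag' : ∀ k, blk S⁻¹ k k = 1)
    (hanti' : ∀ k i, k ≠ i → (blk S⁻¹ k i).transpose = -(blk S⁻¹ k i)) :
    S = 1 :=
  block_rigidity_general m n S hpd hdiag hdiag'
end
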